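/- Let G be a topologically sorted DAG on n nodes. A real symmetric positive semidefinite n × n matrix σ belongs to loc(G) if and only if there exist a real matrix A : Matrix (Fin n) (Fin n) ℝ with A i j = 0 unless E j i (so A is strictly lower triangular and supported on the edges of G) and a vector ω : Fin n → ℝ such that σ = (1 − A)⁻¹ * Matrix.diagonal (fun i => ω i ^ 2) * ((1 − A)⁻¹)ᵀ (note 1 − A is invertible since A is strictly lower triangular). -/

import Mathlib

open Matrix

noncomputable section

/-- The parent set of a node `j` in the DAG with edge relation `E`. -/
def parents {n : ℕ} (E : Fin n → Fin n → Prop) [DecidableRel E] (j : Fin n) : Finset (Fin n) :=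
  Finset.univ.filter (fun i => E i j)

/-- The rank of the submatrix of `σ` with rows `A` and columns `B`. -/
def subRank {n : ℕ} (σ : Matrix (Fin n) (Fin n) ℝ) (A B : Finset (Fin n)) : ℕ :=
  (σ.submatrix (fun a : A => (a : Fin n)) (fun b : B => (b : Fin n))).rank

/-- `loc(G)`: positive semidefinite matrices satisfying the rank conditions of the local
Markov relations of the DAG `G`. -/
def locSet {n : ℕ} (E : Fin n → Fin n → Prop) [DecidableRel E] :
    Set (Matrix (Fin n) (Fin n) ℝ) :=
  {σ | σ.PosSemidef ∧ ∀ i j : Fin n, i < j → ¬ E i j →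
    subRank σ (insert i (parents E j)) (insert j (parents E j)) =
      subRank σ (parents E j) (parents E j)}

/-!
Write `L = 1 - A`, a unit lower triangular matrix. A factorization `σ = L⁻¹ Ω² L⁻ᵀ` exists iff
`σ Lᵀ` is lower triangular: then `L σ Lᵀ` is symmetric, lower triangular and positive
semidefinite, hence `Ω²` for some diagonal `Ω`. Entrywise, `σ Lᵀ` is lower triangular iff for
every `i < j` the regression equation `σ i j = ∑ₖ A j k σ i k` holds.

For positive semidefinite `σ` and `K ⊆ R`, the matrices `σ_{R,K}` and `σ_{K,K}` have the same
kernel (`xᵀ σ x = 0` forces `σ x = 0`), hence the same rank. So the local Markov rank condition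
for `i < j` says that column `j` of `σ`, on the rows `{i} ∪ pa(j)`, is a combination of the
columns `pa(j)`. Two such combinations differ by a kernel vector of `σ_{pa(j),pa(j)}`, hence of
`σ`, so the regression coefficients of `j` on `pa(j)` serve for every `i < j` at once.
-/

namespace Matrix

section Triangular

variable {ι : Type*} [LinearOrder ι]

theorem IsLowerTriangular.eq_diagonal_of_isSymm [DecidableEq ι] {D : Matrix ι ι ℝ}
    (hD : D.IsLowerTriangular) (hDs : D.IsSymm) : D = diagonal D.diag := by
  ext i j
  rcases lt_trichotomy i j with h | rfl | h
  · rw [diagonal_apply_ne _ h.ne]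
    exact hD (OrderDual.toDual_lt_toDual.mpr h)
  · simp
  · rw [← hDs.apply, diagonal_apply_ne _ h.ne']
    exact hD (OrderDual.toDual_lt_toDual.mpr h)

variable [DecidableEq ι]

theorem isLowerTriangular_one_sub {A : Matrix ι ι ℝ} (hA : ∀ i j, i ≤ j → A i j = 0) :
    (1 - A).IsLowerTriangular := fun i j (hij : i < j) => by
  simp [one_apply_ne hij.ne, hA i j hij.le]

variable [Fintype ι]

theorem det_one_sub {A : Matrix ι ι ℝ} (hA : ∀ i j, i ≤ j → A i j = 0) : (1 - A).det = 1 := by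
  rw [det_of_isLowerTriangular _ (isLowerTriangular_one_sub hA)]
  exact Finset.prod_eq_one fun i _ => by simp [hA i i le_rfl]

theorem isLowerTriangular_mul_one_sub_transpose_iff {σ A : Matrix ι ι ℝ} :
    (σ * (1 - A)ᵀ).IsLowerTriangular ↔ ∀ i j, i < j → σ i j = (σ *ᵥ A j) i := by
  have hentry : ∀ i j, (σ * (1 - A)ᵀ : Matrix ι ι ℝ) i j = σ i j - (σ *ᵥ A j) i := fun i j => by
    rw [transpose_sub, transpose_one, Matrix.mul_sub, Matrix.mul_one, sub_apply]
    rfl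
  simp only [BlockTriangular, OrderDual.toDual_lt_toDual, hentry, sub_eq_zero]

theorem exists_eq_inv_mul_diagonal_mul_inv_transpose_iff {σ L : Matrix ι ι ℝ}
    (hσ : σ.PosSemidef) (hL : L.IsLowerTriangular) (hdet : IsUnit L.det) :
    (∃ ω : ι → ℝ, σ = L⁻¹ * diagonal (fun i => ω i ^ 2) * L⁻¹ᵀ) ↔
      (σ * Lᵀ).IsLowerTriangular := by
  have : Invertible L := invertibleOfIsUnitDet L hdet
  constructor
  · rintro ⟨ω, rfl⟩
    rw [Matrix.mul_assoc _ L⁻¹ᵀ, ← transpose_mul, mul_inv_of_invertible, transpose_one,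
      Matrix.mul_one]
    exact (blockTriangular_inv_of_blockTriangular hL).mul (blockTriangular_diagonal _)
  · intro h
    set D := L * σ * Lᵀ with hD
    have hDpsd : D.PosSemidef := by
      simpa [conjTranspose_eq_transpose_of_trivial] using hσ.mul_mul_conjTranspose_same L
    have hDdiag : D = diagonal D.diag := by
      refine IsLowerTriangular.eq_diagonal_of_isSymm ?_
        (isHermitian_iff_isSymm.mp hDpsd.isHermitian)
      rw [hD, Matrix.mul_assoc]
      exact hL.mul h
    refine ⟨fun i => √(D i i), ?_⟩
    simp_rw [Real.sq_sqrt hDpsd.diag_nonneg]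
    change σ = L⁻¹ * diagonal D.diag * L⁻¹ᵀ
    rw [← hDdiag, hD, ← Matrix.mul_assoc, ← Matrix.mul_assoc, inv_mul_of_invertible,
      Matrix.one_mul, Matrix.mul_assoc, ← transpose_mul, inv_mul_of_invertible, transpose_one,
      Matrix.mul_one]

theorem exists_eq_inv_one_sub_mul_diagonal_mul_iff {σ A : Matrix ι ι ℝ} (hσ : σ.PosSemidef)
    (hA : ∀ i j, i ≤ j → A i j = 0) :
    (∃ ω : ι → ℝ, σ = (1 - A)⁻¹ * diagonal (fun i => ω i ^ 2) * (1 - A)⁻¹ᵀ) ↔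
      ∀ i j, i < j → σ i j = (σ *ᵥ A j) i := by
  rw [exists_eq_inv_mul_diagonal_mul_inv_transpose_iff hσ (isLowerTriangular_one_sub hA)
    (by rw [det_one_sub hA]; exact isUnit_one), isLowerTriangular_mul_one_sub_transpose_iff]

end Triangular

end Matrix

open Module

theorem Matrix.PosSemidef.mulVec_eq_zero_of_forall_mem {ι : Type*} [Fintype ι]
    {σ : Matrix ι ι ℝ} (hσ : σ.PosSemidef) {K : Finset ι} {x : ι → ℝ}
    (hx : ∀ i ∉ K, x i = 0) (hσx : ∀ k ∈ K, (σ *ᵥ x) k = 0) : σ *ᵥ x = 0 := by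
  refine (hσ.dotProduct_mulVec_zero_iff x).mp (Finset.sum_eq_zero fun i _ => ?_)
  by_cases hi : i ∈ K
  · simp [hσx i hi]
  · simp [hx i hi]

section SubRank

variable {n : ℕ} (σ : Matrix (Fin n) (Fin n) ℝ)

def colSpan (R C : Finset (Fin n)) : Submodule ℝ (R → ℝ) :=
  Submodule.span ℝ ((fun c (r : R) => σ r c) '' C)

theorem subRank_eq_finrank_colSpan (R C : Finset (Fin n)) :
    subRank σ R C = finrank ℝ (colSpan σ R C) := by
  rw [subRank, rank_eq_finrank_span_cols, colSpan, Set.image_eq_range]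
  rfl

variable {σ}

theorem mem_colSpan_iff {R C : Finset (Fin n)} {v : R → ℝ} :
    v ∈ colSpan σ R C ↔ ∃ x : Fin n → ℝ, (∀ i ∉ C, x i = 0) ∧ ∀ r : R, v r = (σ *ᵥ x) r := by
  classical
  rw [colSpan, Submodule.mem_span_image_finset_iff_exists_fun']
  constructor
  · rintro ⟨c, rfl⟩
    refine ⟨fun i => if i ∈ C then c i else 0, fun i hi => if_neg hi, fun r => ?_⟩
    simp [mulVec, dotProduct, Finset.sum_apply, mul_comm]
  · rintro ⟨x, hx, hv⟩
    refine ⟨x, funext fun r => ?_⟩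
    rw [hv, Finset.sum_apply]
    simp only [mulVec, dotProduct, Pi.smul_apply, smul_eq_mul, mul_comm (x _)]
    exact Finset.sum_subset (Finset.subset_univ C) fun i _ hi => by simp [hx i hi]

theorem subRank_insert_eq_iff {R C : Finset (Fin n)} {j : Fin n} :
    subRank σ R (insert j C) = subRank σ R C ↔
      ∃ x : Fin n → ℝ, (∀ i ∉ C, x i = 0) ∧ ∀ r ∈ R, σ r j = (σ *ᵥ x) r := by
  classical
  have hins : colSpan σ R (insert j C) =
      Submodule.span ℝ (insert (fun r : R => σ r j) ((fun c (r : R) => σ r c) '' C)) := by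
    rw [colSpan, Finset.coe_insert, Set.image_insert_eq]
  have hle : colSpan σ R C ≤ colSpan σ R (insert j C) :=
    Submodule.span_mono (Set.image_mono (by simp))
  have hmem : (fun r : R => σ r j) ∈ colSpan σ R C ↔
      ∃ x : Fin n → ℝ, (∀ i ∉ C, x i = 0) ∧ ∀ r ∈ R, σ r j = (σ *ᵥ x) r := by
    simp only [mem_colSpan_iff, Subtype.forall]
  rw [← hmem, subRank_eq_finrank_colSpan, subRank_eq_finrank_colSpan]
  constructor
  · intro h
    rw [Submodule.eq_of_le_of_finrank_eq hle h.symm, hins]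
    exact Submodule.subset_span (Set.mem_insert _ _)
  · intro h
    rw [hins, Submodule.span_insert_eq_span h, colSpan]

theorem subRank_comm (hσ : σ.IsSymm) (R C : Finset (Fin n)) : subRank σ R C = subRank σ C R := by
  rw [subRank, subRank, ← rank_transpose, transpose_submatrix, hσ.eq]

theorem subRank_eq_of_subset (hσ : σ.PosSemidef) {R K : Finset (Fin n)} (h : K ⊆ R) :
    subRank σ R K = subRank σ K K := by
  let π : (R → ℝ) →ₗ[ℝ] (K → ℝ) := LinearMap.funLeft ℝ ℝ (fun k : K => ⟨k, h k.2⟩)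
  have hmap : (colSpan σ R K).map π = colSpan σ K K := by
    rw [colSpan, colSpan, Submodule.map_span, Set.image_image]
    rfl
  have hinj : Function.Injective (π.domRestrict (colSpan σ R K)) := by
    rw [← LinearMap.ker_eq_bot, eq_bot_iff]
    rintro ⟨v, hv⟩ hπv
    obtain ⟨x, hx, hvx⟩ := mem_colSpan_iff.mp hv
    have hσx : σ *ᵥ x = 0 := hσ.mulVec_eq_zero_of_forall_mem hx fun k hk => by
      rw [← hvx ⟨k, h hk⟩]
      exact congrFun (LinearMap.mem_ker.mp hπv) ⟨k, hk⟩
    rw [Submodule.mem_bot, Subtype.ext_iff]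
    funext r
    exact (hvx r).trans (congrFun hσx r)
  rw [subRank_eq_finrank_colSpan, subRank_eq_finrank_colSpan, ← hmap,
    ← LinearMap.range_domRestrict, LinearMap.finrank_range_of_inj hinj]

end SubRank

section LocalMarkov

variable {n : ℕ} {E : Fin n → Fin n → Prop} [DecidableRel E] {σ : Matrix (Fin n) (Fin n) ℝ}

theorem mem_parents {i j : Fin n} : i ∈ parents E j ↔ E i j := by
  simp [parents]

theorem exists_regression (hσ : σ.PosSemidef) (K : Finset (Fin n)) (j : Fin n) :
    ∃ x : Fin n → ℝ, (∀ i ∉ K, x i = 0) ∧ ∀ k ∈ K, σ k j = (σ *ᵥ x) k := by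
  refine subRank_insert_eq_iff.mp ?_
  rw [subRank_comm (isHermitian_iff_isSymm.mp hσ.isHermitian),
    subRank_eq_of_subset hσ (Finset.subset_insert j K)]

theorem exists_regression_of_mem_locSet (h : σ ∈ locSet E) :
    ∃ A : Matrix (Fin n) (Fin n) ℝ, (∀ i j, ¬E j i → A i j = 0) ∧
      ∀ i j, i < j → σ i j = (σ *ᵥ A j) i := by
  obtain ⟨hσ, hloc⟩ := h
  choose A hAsupp hAreg using fun j => exists_regression hσ (parents E j) j
  refine ⟨A, fun j k hkj => hAsupp j k (mt mem_parents.mp hkj), fun i j hij => ?_⟩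
  by_cases hi : i ∈ parents E j
  · exact hAreg j i hi
  obtain ⟨y, hysupp, hyreg⟩ := subRank_insert_eq_iff.mp <|
    (hloc i j hij (mt mem_parents.mpr hi)).trans
      (subRank_eq_of_subset hσ (Finset.subset_insert i _)).symm
  have hker : σ *ᵥ (y - A j) = 0 := by
    refine hσ.mulVec_eq_zero_of_forall_mem (K := parents E j) (fun k hk => ?_) (fun k hk => ?_)
    · simp [hysupp k hk, hAsupp j k hk]
    · rw [mulVec_sub, Pi.sub_apply, ← hyreg k (Finset.mem_insert_of_mem hk), ← hAreg j k hk,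
        sub_self]
  rw [hyreg i (Finset.mem_insert_self i _), ← sub_eq_zero, ← Pi.sub_apply, ← mulVec_sub, hker,
    Pi.zero_apply]

theorem mem_locSet_of_regression (hσ : σ.PosSemidef) (hE : ∀ i j, E i j → i < j)
    {A : Matrix (Fin n) (Fin n) ℝ} (hA : ∀ i j, ¬E j i → A i j = 0)
    (hreg : ∀ i j, i < j → σ i j = (σ *ᵥ A j) i) : σ ∈ locSet E := by
  refine ⟨hσ, fun i j hij _ => ?_⟩
  rw [← subRank_eq_of_subset hσ (Finset.subset_insert i (parents E j))]
  refine subRank_insert_eq_iff.mpr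
    ⟨A j, fun k hk => hA j k (mt mem_parents.mpr hk), fun r hr => hreg r j ?_⟩
  rcases Finset.mem_insert.mp hr with rfl | hr
  · exact hij
  · exact hE r j (mem_parents.mp hr)

end LocalMarkov

theorem mem_locSet_iff_param_general {n : ℕ}
    (E : Fin n → Fin n → Prop) [DecidableRel E] (hE : ∀ i j, E i j → i < j)
    (σ : Matrix (Fin n) (Fin n) ℝ) (hσ : σ.PosSemidef) :
    σ ∈ locSet E ↔
      ∃ (A : Matrix (Fin n) (Fin n) ℝ) (ω : Fin n → ℝ),
        (∀ i j, ¬ E j i → A i j = 0) ∧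
        σ = (1 - A)⁻¹ * Matrix.diagonal (fun i => ω i ^ 2) * ((1 - A)⁻¹)ᵀ := by
  have hparam : ∀ A : Matrix (Fin n) (Fin n) ℝ, (∀ i j, ¬E j i → A i j = 0) →
      ((∃ ω : Fin n → ℝ, σ = (1 - A)⁻¹ * diagonal (fun i => ω i ^ 2) * (1 - A)⁻¹ᵀ) ↔
        ∀ i j, i < j → σ i j = (σ *ᵥ A j) i) := fun A hA =>
    exists_eq_inv_one_sub_mul_diagonal_mul_iff hσ fun i j hij =>
      hA i j fun hji => (hE j i hji).not_ge hij
  constructor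
  · intro h
    obtain ⟨A, hA, hreg⟩ := exists_regression_of_mem_locSet h
    obtain ⟨ω, hω⟩ := (hparam A hA).mpr hreg
    exact ⟨A, ω, hA, hω⟩
  · rintro ⟨A, ω, hA, hσA⟩
    exact mem_locSet_of_regression hσ hE hA ((hparam A hA).mp ⟨ω, hσA⟩)

/-- Remark after Proposition 3: `loc(G) = Im f_G ∩ Σ⁺`, i.e. a real symmetric positive
semidefinite matrix belongs to `loc(G)` iff it has the trek-rule parametrization
`σ = (I − A)⁻¹ Ω² (I − A)⁻ᵀ` with `A` supported on the edges of `G`. -/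
theorem mem_locSet_iff_param {n : ℕ} (hn : 1 ≤ n)
    (E : Fin n → Fin n → Prop) [DecidableRel E] (hE : ∀ i j, E i j → i < j)
    (σ : Matrix (Fin n) (Fin n) ℝ) (hσ : σ.PosSemidef) :
    σ ∈ locSet E ↔
      ∃ (A : Matrix (Fin n) (Fin n) ℝ) (ω : Fin n → ℝ),
        (∀ i j, ¬ E j i → A i j = 0) ∧
        σ = (1 - A)⁻¹ * Matrix.diagonal (fun i => ω i ^ 2) * ((1 - A)⁻¹)ᵀ :=
  mem_locSet_iff_param_general E hE σ hσ
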